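/- Let C be a stable curve of compact type of genus g ≥ 2 and X an irreducible component. Let M be an X-quasistable line bundle on C of multidegree d_bar and total degree d, and let M' be a line bundle of degree 1 on X and degree 0 on all other components. Then the line bundle M ⊗ M' ⊗ O_C(−Σ Z), where the sum runs over all d_bar-big tails Z of C not containing X, is X-quasistable (of total degree d+1). -/

import Mathlib

open Finset

/-- An abstract (combinatorial) model of a nodal curve: a finite set of irreducible
components `V` (with geometric genus `w v`), and a finite set of nodes `N`, each node
lying on the (unordered pair of) components recorded by `ends`. -/
structure NodalCurve where
  V : Type
  N : Type
  [instFV : Fintype V]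
  [instDV : DecidableEq V]
  [instFN : Fintype N]
  [instDN : DecidableEq N]
  ends : N → Sym2 V
  w : V → ℕ

namespace NodalCurve

variable (C : NodalCurve)

instance : Fintype C.V := C.instFV
instance : DecidableEq C.V := C.instDV
instance : Fintype C.N := C.instFN
instance : DecidableEq C.N := C.instDN

/-- The dual graph of the curve (as a simple graph on the components). -/
def graph : SimpleGraph C.V :=
  SimpleGraph.fromRel (fun u v => ∃ n, C.ends n = s(u, v))

/-- The number of branches (ends) of the node `n` lying on the subcurve `S`. -/
def endsIn (S : Finset C.V) (n : C.N) : ℕ :=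
  Sym2.lift ⟨fun a b => (if a ∈ S then 1 else 0) + (if b ∈ S then 1 else 0),
    fun _ _ => add_comm _ _⟩ (C.ends n)

/-- `k S = #(Y ∩ Y')`: the number of nodes where the subcurve `S` meets its complement. -/
def k (S : Finset C.V) : ℕ := (univ.filter fun n => C.endsIn S n = 1).card

/-- nodes both of whose branches lie on `S`. -/
def internalNodes (S : Finset C.V) : ℕ := (univ.filter fun n => C.endsIn S n = 2).card

/-- The (arithmetic) genus of the curve. -/
def genus : ℤ :=
  ∑ v, (C.w v : ℤ) + (Fintype.card C.N : ℤ) - (Fintype.card C.V : ℤ) + 1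

/-- The genus `1 - χ(O_Y)` of a (connected) subcurve with components `S`. -/
def genusSub (S : Finset C.V) : ℤ :=
  ∑ v ∈ S, (C.w v : ℤ) + (C.internalNodes S : ℤ) - (S.card : ℤ) + 1

/-- `χ(O_Y)` for the subcurve `Y` with components `S`. -/
def chiO (S : Finset C.V) : ℤ :=
  (S.card : ℤ) - ∑ v ∈ S, (C.w v : ℤ) - (C.internalNodes S : ℤ)

/-- The degree of `ω_C` restricted to the subcurve with components `S`. -/
def degω (S : Finset C.V) : ℤ :=
  ∑ v ∈ S, (2 * (C.w v : ℤ) - 2) + ∑ n, (C.endsIn S n : ℤ)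

/-- Connectedness of the subcurve with components `S`. -/
def connectedSub (S : Finset C.V) : Prop := (C.graph.induce (S : Set C.V)).Connected

/-- Connectedness of the curve. -/
def Conn : Prop := C.graph.Connected

/-- The curve is of compact type: every node is separating, i.e. the dual graph
(with its multiple edges and loops) is a tree. -/
def CompactType : Prop :=
  Function.Injective C.ends ∧ (∀ n, ¬ (C.ends n).IsDiag) ∧ C.graph.IsTree

/-- Deligne–Mumford stability. -/
def Stable : Prop := ∀ v, 0 < 2 * (C.w v : ℤ) - 2 + ∑ n, (C.endsIn {v} n : ℤ)

/-- A tail: a subcurve meeting its complement in exactly one node. -/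
def isTail (S : Finset C.V) : Prop := C.k S = 1

/-- The degree `d_Y` of a multidegree `e` on the subcurve with components `S`. -/
def degSub (e : C.V → ℤ) (S : Finset C.V) : ℤ := ∑ v ∈ S, e v

/-- The total degree of a multidegree. -/
def totalDeg (e : C.V → ℤ) : ℤ := ∑ v, e v

/-- Semistability (w.r.t. the canonical polarization) at the subcurve `S`:
`|d_Y - d·deg(ω_C|_Y)/(2g-2)| ≤ k_Y/2`. -/
def semistableAt (e : C.V → ℤ) (S : Finset C.V) : Prop :=
  |(C.degSub e S : ℚ) - (C.totalDeg e : ℚ) * (C.degω S : ℚ) / (2 * (C.genus : ℚ) - 2)|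
    ≤ (C.k S : ℚ) / 2

/-- The strict lower inequality of quasistability at the subcurve `S`:
`d_Y - d·deg(ω_C|_Y)/(2g-2) > -k_Y/2`. -/
def quasistableLowAt (e : C.V → ℤ) (S : Finset C.V) : Prop :=
  -((C.k S : ℚ) / 2) <
    (C.degSub e S : ℚ) - (C.totalDeg e : ℚ) * (C.degω S : ℚ) / (2 * (C.genus : ℚ) - 2)

/-- A semistable multidegree. -/
def semistable (e : C.V → ℤ) : Prop :=
  ∀ S : Finset C.V, S.Nonempty → S ≠ univ → C.semistableAt e S

/-- An `X`-quasistable multidegree. -/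
def Xquasistable (X : C.V) (e : C.V → ℤ) : Prop :=
  C.semistable e ∧
    ∀ S : Finset C.V, S.Nonempty → S ≠ univ → X ∈ S → C.quasistableLowAt e S

/-- A `d̄`-big tail: `d_Z·deg(ω_C) - d·deg(ω_C|_Z) < 2g_Z - g`. -/
def isBigTail (e : C.V → ℤ) (S : Finset C.V) : Prop :=
  C.isTail S ∧
    C.degSub e S * (2 * C.genus - 2) - C.totalDeg e * C.degω S
      < 2 * C.genusSub S - C.genus

/-- `S` is (the set of components of) a connected component of the complement `X'`
of the irreducible component `x`. -/
def complComponent (x : C.V) (S : Finset C.V) : Prop :=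
  x ∉ S ∧ S.Nonempty ∧ C.connectedSub S ∧
    ∀ u ∈ S, ∀ v : C.V, C.graph.Adj u v → v ≠ x → v ∈ S

/-- `T` is (the set of components of) a connected component of the subcurve `S`. -/
def subComponent (S T : Finset C.V) : Prop :=
  T ⊆ S ∧ T.Nonempty ∧ C.connectedSub T ∧
    ∀ u ∈ T, ∀ v ∈ S, C.graph.Adj u v → v ∈ T

/-- A central component: every connected component `Z` of `X'` has `g_Z < g/2`. -/
def central (x : C.V) : Prop :=
  ∀ S : Finset C.V, C.complComponent x S → 2 * C.genusSub S < C.genus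

/-- A semicentral component: every connected component `Z` of `X'` has `g_Z ≤ g/2`. -/
def semicentral (x : C.V) : Prop :=
  ∀ S : Finset C.V, C.complComponent x S → 2 * C.genusSub S ≤ C.genus

end NodalCurve
/-!
On a curve of compact type every node `n` cuts off a tail `tailAt X n` not containing `X`, and
the indicator of any subcurve `S` telescopes along the dual tree:
`[w ∈ S] - [X ∈ S] = ∑ₙ εₙ [w ∈ tailAt X n]`, where the signs `εₙ ∈ {-1, 0, 1}` live on the
nodes at which `S` meets its complement. Since the excess of a multidegree is additive and
vanishes on all of `C`, it follows that `excess S = ∑ₙ εₙ · excess (tailAt X n)`, so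
`X`-quasistability only has to be checked on the tails `tailAt X n`, where it reads
`-(g - 1) ≤ excess < g - 1`. The twist changes the excess of such a tail `Z` by
`(2g - 2)[Z is big] - deg ω_C|_Z`, and since `deg ω_C|_Z = 2g_Z - 1` lies in `[1, 2g - 3]`,
the bigness threshold `2g_Z - g` is exactly what returns it to that window.
-/

theorem SimpleGraph.Reachable.apply_eq_of_forall_adj {V α : Type*} {G : SimpleGraph V}
    {f : V → α} (hf : ∀ u v, G.Adj u v → f u = f v) {u v : V} (h : G.Reachable u v) :
    f u = f v := by
  rw [SimpleGraph.reachable_iff_reflTransGen] at h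
  induction h with
  | refl => rfl
  | tail _ hadj ih => exact ih.trans (hf _ _ hadj)

namespace NodalCurve

variable {C : NodalCurve}

lemma exists_ends_eq (n : C.N) : ∃ a b, C.ends n = s(a, b) :=
  (C.ends n).ind fun a b => ⟨a, b, rfl⟩

lemma endsIn_of_ends_eq {n : C.N} {a b : C.V} (h : C.ends n = s(a, b)) (S : Finset C.V) :
    C.endsIn S n = (if a ∈ S then 1 else 0) + (if b ∈ S then 1 else 0) := by
  rw [endsIn, h, Sym2.lift_mk]

lemma endsIn_eq_sum_singleton (S : Finset C.V) (n : C.N) :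
    C.endsIn S n = ∑ v ∈ S, C.endsIn {v} n := by
  obtain ⟨a, b, h⟩ := exists_ends_eq n
  simp [endsIn_of_ends_eq h, Finset.sum_add_distrib]

lemma endsIn_univ (n : C.N) : C.endsIn univ n = 2 := by
  obtain ⟨a, b, h⟩ := exists_ends_eq n
  simp [endsIn_of_ends_eq h]

lemma endsIn_le_two (S : Finset C.V) (n : C.N) : C.endsIn S n ≤ 2 := by
  obtain ⟨a, b, h⟩ := exists_ends_eq n
  rw [endsIn_of_ends_eq h]
  split_ifs <;> omega

lemma k_eq_sum (S : Finset C.V) : (C.k S : ℤ) = ∑ n, if C.endsIn S n = 1 then 1 else 0 := by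
  rw [k, Finset.card_filter, Nat.cast_sum]
  simp only [Nat.cast_ite, Nat.cast_one, Nat.cast_zero]

lemma sum_endsIn (S : Finset C.V) :
    ∑ n, (C.endsIn S n : ℤ) = C.k S + 2 * C.internalNodes S := by
  rw [k_eq_sum, internalNodes, Finset.card_filter, Nat.cast_sum, Finset.mul_sum,
    ← Finset.sum_add_distrib]
  refine Finset.sum_congr rfl fun n _ => ?_
  have := endsIn_le_two S n
  interval_cases C.endsIn S n <;> simp

lemma degω_eq_sum_singleton (S : Finset C.V) : C.degω S = ∑ v ∈ S, C.degω {v} := by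
  simp only [degω, Finset.sum_singleton, Finset.sum_add_distrib]
  rw [Finset.sum_comm]
  simp [endsIn_eq_sum_singleton S]

lemma degω_singleton_pos (hst : C.Stable) (v : C.V) : 0 < C.degω {v} := by
  simpa [degω] using hst v

lemma one_le_degω (hst : C.Stable) {S : Finset C.V} (hS : S.Nonempty) : 1 ≤ C.degω S := by
  rw [degω_eq_sum_singleton]
  obtain ⟨v, hv⟩ := hS
  calc (1 : ℤ) ≤ C.degω {v} := degω_singleton_pos hst v
    _ ≤ ∑ v ∈ S, C.degω {v} :=
      Finset.single_le_sum (fun u _ => (degω_singleton_pos hst u).le) hv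

lemma degω_univ (C : NodalCurve) : C.degω univ = 2 * C.genus - 2 := by
  simp only [degω, endsIn_univ, genus, Finset.sum_sub_distrib, ← Finset.mul_sum,
    Finset.sum_const, Finset.card_univ, Int.nsmul_eq_mul, Nat.cast_ofNat]
  ring

lemma degω_add_degω_compl (S : Finset C.V) : C.degω S + C.degω Sᶜ = 2 * C.genus - 2 := by
  rw [degω_eq_sum_singleton S, degω_eq_sum_singleton Sᶜ, Finset.sum_add_sum_compl,
    ← degω_eq_sum_singleton, degω_univ]

lemma degω_eq_genusSub (S : Finset C.V) : C.degω S = 2 * C.genusSub S - 2 + C.k S := by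
  rw [degω, sum_endsIn, genusSub, Finset.sum_sub_distrib, ← Finset.mul_sum,
    Finset.sum_const, Int.nsmul_eq_mul]
  ring

def cutGraph (C : NodalCurve) (n : C.N) : SimpleGraph C.V := C.graph.deleteEdges {C.ends n}

open Classical in
noncomputable def tailAt (C : NodalCurve) (X : C.V) (n : C.N) : Finset C.V :=
  univ.filter fun v => ¬ (C.cutGraph n).Reachable v X

lemma mem_tailAt {X v : C.V} {n : C.N} :
    v ∈ C.tailAt X n ↔ ¬ (C.cutGraph n).Reachable v X := by
  simp [tailAt]

lemma notMem_tailAt_self (X : C.V) (n : C.N) : X ∉ C.tailAt X n := by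
  simp [mem_tailAt]

lemma adj_of_ends_eq {n : C.N} {a b : C.V} (h : C.ends n = s(a, b)) (hab : a ≠ b) :
    C.graph.Adj a b := by
  rw [graph, SimpleGraph.fromRel_adj]
  exact ⟨hab, Or.inl ⟨n, h⟩⟩

lemma exists_ends_eq_of_adj {a b : C.V} (h : C.graph.Adj a b) : ∃ n, C.ends n = s(a, b) := by
  rw [graph, SimpleGraph.fromRel_adj] at h
  rcases h.2 with ⟨n, hn⟩ | ⟨n, hn⟩
  · exact ⟨n, hn⟩
  · exact ⟨n, hn.trans Sym2.eq_swap⟩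

lemma cutGraph_adj {n : C.N} {a b : C.V} :
    (C.cutGraph n).Adj a b ↔ C.graph.Adj a b ∧ s(a, b) ≠ C.ends n := by
  simp [cutGraph]

lemma mem_tailAt_iff_of_adj {X u v : C.V} {n : C.N} (h : C.graph.Adj u v)
    (hne : s(u, v) ≠ C.ends n) : u ∈ C.tailAt X n ↔ v ∈ C.tailAt X n := by
  have hr : (C.cutGraph n).Reachable u v := (cutGraph_adj.2 ⟨h, hne⟩).reachable
  simp only [mem_tailAt, not_iff_not]
  exact ⟨hr.symm.trans, hr.trans⟩

lemma not_reachable_cutGraph (hct : C.CompactType) {n : C.N} {a b : C.V}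
    (h : C.ends n = s(a, b)) : ¬ (C.cutGraph n).Reachable a b := by
  have hab : a ≠ b := by simpa [h] using hct.2.1 n
  have hbr := SimpleGraph.isAcyclic_iff_forall_adj_isBridge.1 hct.2.2.2 (adj_of_ends_eq h hab)
  rw [SimpleGraph.isBridge_iff] at hbr
  simpa [cutGraph, h] using hbr

lemma reachable_cutGraph_or (hconn : C.Conn) {n : C.N} {a b : C.V} (h : C.ends n = s(a, b))
    (v : C.V) : (C.cutGraph n).Reachable v a ∨ (C.cutGraph n).Reachable v b := by
  obtain ⟨p⟩ := hconn.preconnected v a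
  induction p with
  | nil => exact Or.inl .rfl
  | @cons v x _ hadj _ ih =>
    by_cases hs : s(v, x) = C.ends n
    · rw [h, Sym2.eq_iff] at hs
      rcases hs with ⟨rfl, -⟩ | ⟨rfl, -⟩
      · exact Or.inl .rfl
      · exact Or.inr .rfl
    · have hr := (cutGraph_adj.2 ⟨hadj, hs⟩).reachable
      exact (ih h).imp hr.trans hr.trans

lemma exists_ends_eq_tailAt (hconn : C.Conn) (hct : C.CompactType) (X : C.V) (n : C.N) :
    ∃ a b, C.ends n = s(a, b) ∧ a ∉ C.tailAt X n ∧ b ∈ C.tailAt X n := by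
  obtain ⟨a, b, h⟩ := exists_ends_eq n
  have hab := not_reachable_cutGraph hct h
  simp only [mem_tailAt, not_not]
  rcases reachable_cutGraph_or hconn h X with hX | hX
  · exact ⟨a, b, h, hX.symm, fun hb => hab (hX.symm.trans hb.symm)⟩
  · exact ⟨b, a, h.trans Sym2.eq_swap, hX.symm, fun ha => hab (ha.trans hX)⟩

lemma eq_of_ends_eq_of_mem_tailAt (hct : C.CompactType) {X x y : C.V} {m n : C.N}
    (hm : C.ends m = s(x, y)) (hx : x ∈ C.tailAt X n) (hy : y ∉ C.tailAt X n) : m = n := by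
  have hxy : x ≠ y := by rintro rfl; exact hy hx
  by_contra hmn
  refine hy ((mem_tailAt_iff_of_adj (adj_of_ends_eq hm hxy) fun h => hmn ?_).1 hx)
  exact hct.1 (hm.trans h)

lemma isTail_tailAt (hconn : C.Conn) (hct : C.CompactType) (X : C.V) (n : C.N) :
    C.isTail (C.tailAt X n) := by
  obtain ⟨a, b, h, ha, hb⟩ := exists_ends_eq_tailAt hconn hct X n
  refine Finset.card_eq_one.2 ⟨n, Finset.ext fun m => ?_⟩
  simp only [Finset.mem_filter, Finset.mem_univ, true_and, Finset.mem_singleton]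
  refine ⟨fun hm => ?_, fun hm => by simp [hm, endsIn_of_ends_eq h, ha, hb]⟩
  obtain ⟨x, y, hxy⟩ := exists_ends_eq m
  rw [endsIn_of_ends_eq hxy] at hm
  by_cases hx : x ∈ C.tailAt X n <;> by_cases hy : y ∈ C.tailAt X n <;> simp [hx, hy] at hm
  · exact eq_of_ends_eq_of_mem_tailAt hct hxy hx hy
  · exact eq_of_ends_eq_of_mem_tailAt hct (hxy.trans Sym2.eq_swap) hy hx

lemma nonempty_of_isTail {S : Finset C.V} (hS : C.isTail S) : S.Nonempty := by
  rw [Finset.nonempty_iff_ne_empty]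
  rintro rfl
  obtain ⟨n, hn⟩ := Finset.card_eq_one.1 hS
  obtain ⟨a, b, h⟩ := exists_ends_eq n
  have : n ∈ univ.filter fun n => C.endsIn ∅ n = 1 := hn ▸ Finset.mem_singleton_self n
  simp [endsIn_of_ends_eq h] at this

lemma eq_of_endsIn_eq_one {S : Finset C.V} (hS : C.isTail S) {m m' : C.N}
    (hm : C.endsIn S m = 1) (hm' : C.endsIn S m' = 1) : m = m' :=
  Finset.card_le_one.1 hS.le _ (by simpa using hm) _ (by simpa using hm')

lemma mem_iff_of_reachable_cutGraph {S : Finset C.V} (hS : C.isTail S) {m : C.N}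
    (hm : C.endsIn S m = 1) {u v : C.V} (h : (C.cutGraph m).Reachable u v) :
    u ∈ S ↔ v ∈ S := by
  refine iff_of_eq (h.apply_eq_of_forall_adj fun u v huv => ?_)
  obtain ⟨hadj, hne⟩ := cutGraph_adj.1 huv
  obtain ⟨m', hm'⟩ := exists_ends_eq_of_adj hadj
  have hm'1 : C.endsIn S m' ≠ 1 := by
    rintro h1
    rw [eq_of_endsIn_eq_one hS h1 hm] at hm'
    exact hne hm'.symm
  rw [endsIn_of_ends_eq hm'] at hm'1
  by_cases hu : u ∈ S <;> by_cases hv : v ∈ S <;> simp_all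

lemma eq_tailAt_of_isTail (hconn : C.Conn) {X : C.V} {S : Finset C.V} (hS : C.isTail S)
    (hXS : X ∉ S) {m : C.N} {c c' : C.V} (hm : C.ends m = s(c, c')) (hc : c ∈ S)
    (hc' : c' ∉ S) : S = C.tailAt X m := by
  have h1 : C.endsIn S m = 1 := by simp [endsIn_of_ends_eq hm, hc, hc']
  have hS_iff : ∀ {u v}, (C.cutGraph m).Reachable u v → (u ∈ S ↔ v ∈ S) :=
    mem_iff_of_reachable_cutGraph hS h1
  ext v
  rw [mem_tailAt]
  refine ⟨fun hv hvX => hXS ((hS_iff hvX).1 hv), fun hv => ?_⟩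
  rcases reachable_cutGraph_or hconn hm v with hvc | hvc
  · exact (hS_iff hvc).2 hc
  · rcases reachable_cutGraph_or hconn hm X with hXc | hXc
    · exact absurd ((hS_iff hXc).2 hc) hXS
    · exact absurd (hvc.trans hXc.symm) hv

/-- `+1` if only the branch of `n` away from `X` lies on `S`, `-1` if only the branch on the side
of `X` does, `0` otherwise. -/
noncomputable def crossCoeff (C : NodalCurve) (X : C.V) (S : Finset C.V) (n : C.N) : ℤ :=
  C.endsIn (S ∩ C.tailAt X n) n - C.endsIn (S \ C.tailAt X n) n

lemma crossCoeff_of_ends_eq {X : C.V} {n : C.N} {a b : C.V} (h : C.ends n = s(a, b))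
    (ha : a ∉ C.tailAt X n) (hb : b ∈ C.tailAt X n) (S : Finset C.V) :
    C.crossCoeff X S n = (if b ∈ S then 1 else 0) - (if a ∈ S then 1 else 0) := by
  rw [crossCoeff, endsIn_of_ends_eq h, endsIn_of_ends_eq h]
  by_cases h1 : a ∈ S <;> by_cases h2 : b ∈ S <;> simp [h1, h2, ha, hb]

lemma abs_crossCoeff_le (hconn : C.Conn) (hct : C.CompactType) (X : C.V) (S : Finset C.V)
    (n : C.N) :
    |C.crossCoeff X S n| ≤ if C.endsIn S n = 1 then 1 else 0 := by
  obtain ⟨a, b, h, ha, hb⟩ := exists_ends_eq_tailAt hconn hct X n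
  have hab : a ≠ b := by rintro rfl; exact ha hb
  rw [crossCoeff_of_ends_eq h ha hb, endsIn_of_ends_eq h]
  by_cases h1 : a ∈ S <;> by_cases h2 : b ∈ S <;> simp [h1, h2]

lemma crossCoeff_mul_sub (hconn : C.Conn) (hct : C.CompactType) (X : C.V) (S : Finset C.V)
    {m : C.N} {u v : C.V} (h : C.ends m = s(u, v)) :
    C.crossCoeff X S m * ((if u ∈ C.tailAt X m then 1 else 0) -
      (if v ∈ C.tailAt X m then 1 else 0)) =
      (if u ∈ S then 1 else 0) - (if v ∈ S then 1 else 0) := by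
  obtain ⟨a, b, hab, ha, hb⟩ := exists_ends_eq_tailAt hconn hct X m
  rw [crossCoeff_of_ends_eq hab ha hb]
  rcases Sym2.eq_iff.1 (h.symm.trans hab) with ⟨rfl, rfl⟩ | ⟨rfl, rfl⟩ <;> simp [ha, hb]

lemma sum_crossCoeff_mul_indicator (hconn : C.Conn) (hct : C.CompactType) (X : C.V)
    (S : Finset C.V) (w : C.V) :
    ∑ n, C.crossCoeff X S n * (if w ∈ C.tailAt X n then 1 else 0) =
      (if w ∈ S then 1 else 0) - (if X ∈ S then 1 else 0) := by
  set f : C.V → ℤ := fun w =>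
    ∑ n, C.crossCoeff X S n * (if w ∈ C.tailAt X n then 1 else 0) - if w ∈ S then 1 else 0
  suffices hf : f w = f X by
    simp only [f, notMem_tailAt_self, if_false, mul_zero, Finset.sum_const_zero] at hf
    linarith
  refine (hconn.preconnected w X).apply_eq_of_forall_adj fun u v huv => ?_
  obtain ⟨m, hm⟩ := exists_ends_eq_of_adj huv
  have hsum : ∑ n, C.crossCoeff X S n * (if u ∈ C.tailAt X n then 1 else 0) -
      ∑ n, C.crossCoeff X S n * (if v ∈ C.tailAt X n then 1 else 0) =
      (if u ∈ S then 1 else 0) - (if v ∈ S then 1 else 0) := by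
    rw [← Finset.sum_sub_distrib, Finset.sum_eq_single m (fun n _ hnm => ?_) (by simp),
      ← mul_sub, crossCoeff_mul_sub hconn hct X S hm]
    have := mem_tailAt_iff_of_adj (X := X) huv fun h => hnm (hct.1 (hm.trans h)).symm
    simp [this]
  simp only [f]
  linarith

lemma sum_eq_sum_crossCoeff_mul (hconn : C.Conn) (hct : C.CompactType) (X : C.V)
    (h : C.V → ℤ) (hsum : ∑ v, h v = 0) (S : Finset C.V) :
    ∑ v ∈ S, h v = ∑ n, C.crossCoeff X S n * ∑ w ∈ C.tailAt X n, h w := by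
  calc ∑ v ∈ S, h v
      = ∑ w, ((if w ∈ S then 1 else 0) - (if X ∈ S then 1 else 0)) * h w := by
        simp [sub_mul, Finset.sum_sub_distrib, hsum, Finset.sum_ite_mem]
    _ = ∑ w, ∑ n, C.crossCoeff X S n * ((if w ∈ C.tailAt X n then 1 else 0) * h w) := by
        simp_rw [← sum_crossCoeff_mul_indicator hconn hct, Finset.sum_mul, mul_assoc]
    _ = ∑ n, C.crossCoeff X S n * ∑ w ∈ C.tailAt X n, h w := by
        rw [Finset.sum_comm]
        simp [← Finset.mul_sum, Finset.sum_ite_mem]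

lemma exists_crossCoeff_eq_neg_one (hconn : C.Conn) (hct : C.CompactType) {X y : C.V}
    {S : Finset C.V} (hX : X ∈ S) (hy : y ∉ S) :
    ∃ n, C.crossCoeff X S n = -1 := by
  have h := sum_crossCoeff_mul_indicator hconn hct X S y
  rw [if_neg hy, if_pos hX] at h
  obtain ⟨n, -, hn⟩ := Finset.exists_lt_of_sum_lt (s := univ) (g := fun _ => (0 : ℤ))
    (f := fun n => C.crossCoeff X S n * if y ∈ C.tailAt X n then 1 else 0)
    (by rw [h, Finset.sum_const_zero]; norm_num)
  have habs : |C.crossCoeff X S n| ≤ 1 :=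
    (abs_crossCoeff_le hconn hct X S n).trans (by split_ifs <;> norm_num)
  by_cases hyn : y ∈ C.tailAt X n <;> simp [hyn] at hn
  exact ⟨n, by rw [abs_le] at habs; omega⟩

/-- `(2g - 2) (d_S - d · deg ω_C|_S / (2g - 2))`, the quantity bounded by (quasi)stability, with
the denominator cleared. -/
def excess (C : NodalCurve) (e : C.V → ℤ) (S : Finset C.V) : ℤ :=
  C.degSub e S * (2 * C.genus - 2) - C.totalDeg e * C.degω S

lemma excess_eq_sum_singleton (e : C.V → ℤ) (S : Finset C.V) :
    C.excess e S = ∑ v ∈ S, C.excess e {v} := by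
  rw [excess, degSub, degω_eq_sum_singleton, Finset.mul_sum, Finset.sum_mul,
    ← Finset.sum_sub_distrib]
  exact Finset.sum_congr rfl fun v _ => by rw [excess, degSub, Finset.sum_singleton]

lemma excess_univ (e : C.V → ℤ) : C.excess e univ = 0 := by
  rw [excess, degω_univ, degSub, totalDeg, sub_self]

lemma excess_eq_sum_crossCoeff_mul (hconn : C.Conn) (hct : C.CompactType) (X : C.V)
    (e : C.V → ℤ) (S : Finset C.V) :
    C.excess e S = ∑ n, C.crossCoeff X S n * C.excess e (C.tailAt X n) := by
  have hsum : ∑ v, C.excess e {v} = 0 := by rw [← excess_eq_sum_singleton, excess_univ]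
  rw [excess_eq_sum_singleton e S, sum_eq_sum_crossCoeff_mul hconn hct X _ hsum S]
  exact Finset.sum_congr rfl fun n _ => by rw [← excess_eq_sum_singleton]

lemma two_mul_genus_sub_two_pos (hg : 2 ≤ C.genus) : (0 : ℚ) < 2 * (C.genus : ℚ) - 2 := by
  have : (2 : ℚ) ≤ C.genus := by exact_mod_cast hg
  linarith

lemma excess_div_eq (hg : 2 ≤ C.genus) (e : C.V → ℤ) (S : Finset C.V) :
    (C.degSub e S : ℚ) - (C.totalDeg e : ℚ) * (C.degω S : ℚ) / (2 * (C.genus : ℚ) - 2) =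
      (C.excess e S : ℚ) / (2 * (C.genus : ℚ) - 2) := by
  rw [excess]
  push_cast
  rw [sub_div, mul_div_cancel_right₀ _ (two_mul_genus_sub_two_pos hg).ne']

lemma semistableAt_iff (hg : 2 ≤ C.genus) (e : C.V → ℤ) (S : Finset C.V) :
    C.semistableAt e S ↔ |C.excess e S| ≤ C.k S * (C.genus - 1) := by
  have hc := two_mul_genus_sub_two_pos hg
  rw [semistableAt, excess_div_eq hg, abs_div, abs_of_pos hc, div_le_iff₀ hc,
    ← @Int.cast_le ℚ]
  push_cast
  constructor <;> intro h <;> linarith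

lemma quasistableLowAt_iff (hg : 2 ≤ C.genus) (e : C.V → ℤ) (S : Finset C.V) :
    C.quasistableLowAt e S ↔ -(C.k S * (C.genus - 1)) < C.excess e S := by
  have hc := two_mul_genus_sub_two_pos hg
  rw [quasistableLowAt, excess_div_eq hg, lt_div_iff₀ hc, ← @Int.cast_lt ℚ]
  push_cast
  constructor <;> intro h <;> linarith

theorem xquasistable_of_excess_tailAt (hconn : C.Conn) (hct : C.CompactType)
    (hg : 2 ≤ C.genus) {X : C.V} {e : C.V → ℤ}
    (hlow : ∀ n, -(C.genus - 1) ≤ C.excess e (C.tailAt X n))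
    (hup : ∀ n, C.excess e (C.tailAt X n) < C.genus - 1) : C.Xquasistable X e := by
  have hterm : ∀ S n, |C.crossCoeff X S n * C.excess e (C.tailAt X n)| ≤
      (if C.endsIn S n = 1 then 1 else 0) * (C.genus - 1) := fun S n => by
    rw [abs_mul]
    exact mul_le_mul (abs_crossCoeff_le hconn hct X S n) (abs_le.2 ⟨hlow n, (hup n).le⟩)
      (abs_nonneg _) (by positivity)
  refine ⟨fun S _ _ => ?_, fun S _ hSu hXS => ?_⟩
  · rw [semistableAt_iff hg, excess_eq_sum_crossCoeff_mul hconn hct X, k_eq_sum, Finset.sum_mul]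
    exact (Finset.abs_sum_le_sum_abs _ _).trans (Finset.sum_le_sum fun n _ => hterm S n)
  · obtain ⟨y, hy⟩ : ∃ y, y ∉ S := by simpa [Finset.eq_univ_iff_forall] using hSu
    obtain ⟨n₀, hn₀⟩ := exists_crossCoeff_eq_neg_one hconn hct hXS hy
    have hends : C.endsIn S n₀ = 1 := by
      by_contra h
      simpa [h, hn₀] using abs_crossCoeff_le hconn hct X S n₀
    rw [quasistableLowAt_iff hg, excess_eq_sum_crossCoeff_mul hconn hct X, k_eq_sum,
      Finset.sum_mul, ← Finset.sum_neg_distrib]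
    refine Finset.sum_lt_sum (fun n _ => neg_le_of_abs_le (hterm S n)) ⟨n₀, mem_univ _, ?_⟩
    rw [hn₀, if_pos hends]
    linarith [hup n₀]

lemma excess_bounds_of_twist (hst : C.Stable) (hg : 2 ≤ C.genus) {X : C.V} {e e' : C.V → ℤ}
    {Z : Finset C.V} (hZ : C.isTail Z) (hXZ : X ∉ Z) (hss : C.semistable e)
    (hdeg : C.totalDeg e' = C.totalDeg e + 1) {t : ℤ} (hZ' : C.degSub e' Z = C.degSub e Z + t)
    (hbig : C.isBigTail e Z → t = 1) (hsmall : ¬ C.isBigTail e Z → t = 0) :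
    -(C.genus - 1) ≤ C.excess e' Z ∧ C.excess e' Z < C.genus - 1 := by
  have hZne := nonempty_of_isTail hZ
  have hssZ := hss Z hZne fun h => hXZ (h ▸ mem_univ X)
  rw [semistableAt_iff hg, hZ, Nat.cast_one, one_mul, abs_le] at hssZ
  have hω := degω_eq_genusSub Z
  rw [hZ, Nat.cast_one] at hω
  have hω_pos := one_le_degω hst hZne
  have hω_compl_pos := one_le_degω hst ⟨X, Finset.mem_compl.2 hXZ⟩
  have hω_add := degω_add_degω_compl Z
  have hex : C.excess e' Z = C.excess e Z + t * (2 * C.genus - 2) - C.degω Z := by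
    rw [excess, excess, hZ', hdeg]
    ring
  unfold excess at hssZ
  by_cases hb : C.isBigTail e Z
  · have hbig_ineq := hb.2
    rw [hex, hbig hb, excess]
    constructor <;> linarith
  · have hsmall_ineq : ¬ (_ < _) := fun h => hb ⟨hZ, h⟩
    rw [hex, hsmall hb, excess]
    constructor <;> linarith

lemma indicator_sub_indicator_tailAt (hconn : C.Conn) (hct : C.CompactType) {X : C.V}
    {S : Finset C.V} (hS : C.isTail S) (hXS : X ∉ S) {c c' : C.V} (hc : c ∈ S) (hc' : c' ∉ S)
    (hadj : C.graph.Adj c c') (n : C.N) :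
    ((if c ∈ C.tailAt X n then 1 else 0) - (if c' ∈ C.tailAt X n then 1 else 0) : ℤ) =
      if S = C.tailAt X n then 1 else 0 := by
  obtain ⟨m, hm⟩ := exists_ends_eq_of_adj hadj
  obtain rfl := eq_tailAt_of_isTail hconn hS hXS hm hc hc'
  by_cases hnm : n = m
  · subst hnm
    simp [hc, hc']
  · have hiff := mem_tailAt_iff_of_adj (X := X) hadj fun h => hnm (hct.1 (hm.trans h)).symm
    have hne : C.tailAt X m ≠ C.tailAt X n := fun h => hc' (h ▸ hiff.1 (h ▸ hc))
    simp [hiff, hne]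

end NodalCurve

open Finset in
/-- Twisting by `O_C(-Z)` adds `+1` on the component of `Z` and `-1` on the component of `Z'`
at the separating node of the tail `Z`; these two components are `cross Z`. -/
theorem twist_quasistable (C : NodalCurve) (hconn : C.Conn) (hct : C.CompactType)
    (hst : C.Stable) (hg : 2 ≤ C.genus) (X : C.V)
    (e : C.V → ℤ) (hq : C.Xquasistable X e)
    (B : Finset (Finset C.V)) (hB : ∀ S : Finset C.V, S ∈ B ↔ C.isBigTail e S ∧ X ∉ S)
    (cross : Finset C.V → C.V × C.V)
    (hcross : ∀ S ∈ B, (cross S).1 ∈ S ∧ (cross S).2 ∉ S ∧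
        C.graph.Adj (cross S).1 (cross S).2)
    (e'' : C.V → ℤ)
    (he'' : ∀ v : C.V, e'' v = e v + (if v = X then 1 else 0) +
        ∑ S ∈ B, ((if v = (cross S).1 then 1 else 0) -
          (if v = (cross S).2 then 1 else 0))) :
    C.Xquasistable X e'' ∧ C.totalDeg e'' = C.totalDeg e + 1 := by
  have hdegSub : ∀ T, C.degSub e'' T = C.degSub e T + (if X ∈ T then 1 else 0) +
      ∑ S ∈ B, ((if (cross S).1 ∈ T then 1 else 0) -
        (if (cross S).2 ∈ T then 1 else 0)) := by
    intro T
    simp only [NodalCurve.degSub, he'', sum_add_distrib]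
    rw [sum_comm]
    simp [sum_sub_distrib]
  have hdeg : C.totalDeg e'' = C.totalDeg e + 1 := by
    have h := hdegSub univ
    simp only [mem_univ, if_true, sub_self, sum_const_zero, add_zero] at h
    exact h
  have htail : ∀ n, C.degSub e'' (C.tailAt X n) =
      C.degSub e (C.tailAt X n) + if C.tailAt X n ∈ B then 1 else 0 := by
    intro n
    rw [hdegSub, if_neg (C.notMem_tailAt_self X n), add_zero, ← sum_ite_eq' B _ fun _ => 1]
    refine congrArg _ (sum_congr rfl fun S hS => ?_)
    obtain ⟨h1, h2, hadj⟩ := hcross S hS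
    obtain ⟨⟨hS, -⟩, hXS⟩ := (hB S).1 hS
    exact NodalCurve.indicator_sub_indicator_tailAt hconn hct hS hXS h1 h2 hadj n
  have hbounds := fun n => NodalCurve.excess_bounds_of_twist hst hg
    (C.isTail_tailAt hconn hct X n) (C.notMem_tailAt_self X n) hq.1 hdeg (htail n)
    (fun h => if_pos ((hB _).2 ⟨h, C.notMem_tailAt_self X n⟩))
    (fun h => if_neg fun h' => h ((hB _).1 h').1)
  exact ⟨NodalCurve.xquasistable_of_excess_tailAt hconn hct hg (fun n => (hbounds n).1)
    (fun n => (hbounds n).2), hdeg⟩
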